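/- Conjunction/disjunction decomposition theorem (FEL): for any *-term P ∧• Q (with P a *-term and Q a P^d-form), fe(P ∧• Q) has the unique conjunction decomposition (fe(P)[T↦□₁, F↦□₂], fe(Q)) and has no disjunction decomposition; for any *-term P ∨• Q (with P a *-term and Q a P^c-form), fe(P ∨• Q) has no conjunction decomposition and its unique disjunction decomposition is (fe(P)[T↦□₁, F↦□₂], fe(Q)). -/
import Mathlib


/-! Shared definitions for left-sequential logics (FEL and SCL),
    evaluation trees, and decompositions. -/

/-- FEL-terms over atoms `A` (`and` = full left-sequential conjunction `∧•`,
    `or` = full left-sequential disjunction `∨•`). -/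
inductive FTerm (A : Type) : Type
  | atom : A → FTerm A
  | tru  : FTerm A
  | fls  : FTerm A
  | neg  : FTerm A → FTerm A
  | and  : FTerm A → FTerm A → FTerm A
  | or   : FTerm A → FTerm A → FTerm A

/-- SCL-terms over atoms `A` (`and` = short-circuit conjunction `∧◦`,
    `or` = short-circuit disjunction `∨◦`). -/
inductive STerm (A : Type) : Type
  | atom : A → STerm A
  | tru  : STerm A
  | fls  : STerm A
  | neg  : STerm A → STerm A
  | and  : STerm A → STerm A → STerm A
  | or   : STerm A → STerm A → STerm A

/-- Evaluation trees: finite binary trees over `A` with leaves `T`, `F`. -/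
inductive ETree (A : Type) : Type
  | tru  : ETree A
  | fls  : ETree A
  | node : ETree A → A → ETree A → ETree A

namespace ETree

/-- `X.subst Y Z = X[T↦Y, F↦Z]`. -/
def subst {A : Type} : ETree A → ETree A → ETree A → ETree A
  | .tru, y, _ => y
  | .fls, _, z => z
  | .node l a r, y, z => .node (subst l y z) a (subst r y z)

def hasTru {A : Type} : ETree A → Prop
  | .tru => True
  | .fls => False
  | .node l _ r => hasTru l ∨ hasTru r

def hasFls {A : Type} : ETree A → Prop
  | .tru => False
  | .fls => True
  | .node l _ r => hasFls l ∨ hasFls r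

def depth {A : Type} : ETree A → ℕ
  | .tru => 0
  | .fls => 0
  | .node l _ r => 1 + max (depth l) (depth r)

end ETree

/-- The full evaluation function `fe : FTerm → 𝒯`. -/
def fe {A : Type} : FTerm A → ETree A
  | FTerm.tru => ETree.tru
  | FTerm.fls => ETree.fls
  | FTerm.atom a => ETree.node ETree.tru a ETree.fls
  | FTerm.neg p => (fe p).subst ETree.fls ETree.tru
  | FTerm.and p q => (fe p).subst (fe q) ((fe q).subst ETree.fls ETree.fls)
  | FTerm.or p q => (fe p).subst ((fe q).subst ETree.tru ETree.tru) (fe q)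

/-- The short-circuit evaluation function `se : STerm → 𝒯`. -/
def se {A : Type} : STerm A → ETree A
  | STerm.tru => ETree.tru
  | STerm.fls => ETree.fls
  | STerm.atom a => ETree.node ETree.tru a ETree.fls
  | STerm.neg p => (se p).subst ETree.fls ETree.tru
  | STerm.and p q => (se p).subst (se q) ETree.fls
  | STerm.or p q => (se p).subst ETree.tru (se q)

/-- Derivability from EqFFEL by equational logic. -/
inductive EqFFEL {A : Type} : FTerm A → FTerm A → Prop
  | refl (p : FTerm A) : EqFFEL p p
  | symm {p q : FTerm A} : EqFFEL p q → EqFFEL q p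
  | trans {p q r : FTerm A} : EqFFEL p q → EqFFEL q r → EqFFEL p r
  | neg_congr {p q : FTerm A} : EqFFEL p q → EqFFEL (FTerm.neg p) (FTerm.neg q)
  | and_congr {p p' q q' : FTerm A} :
      EqFFEL p p' → EqFFEL q q' → EqFFEL (FTerm.and p q) (FTerm.and p' q')
  | or_congr {p p' q q' : FTerm A} :
      EqFFEL p p' → EqFFEL q q' → EqFFEL (FTerm.or p q) (FTerm.or p' q')
  | fel1 : EqFFEL FTerm.fls (FTerm.neg FTerm.tru)
  | fel2 (x y : FTerm A) : EqFFEL (FTerm.or x y) (FTerm.neg (FTerm.and (FTerm.neg x) (FTerm.neg y)))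
  | fel3 (x : FTerm A) : EqFFEL (FTerm.neg (FTerm.neg x)) x
  | fel4 (x y z : FTerm A) : EqFFEL (FTerm.and (FTerm.and x y) z) (FTerm.and x (FTerm.and y z))
  | fel5 (x : FTerm A) : EqFFEL (FTerm.and FTerm.tru x) x
  | fel6 (x : FTerm A) : EqFFEL (FTerm.and x FTerm.tru) x
  | fel7 (x : FTerm A) : EqFFEL (FTerm.and x FTerm.fls) (FTerm.and FTerm.fls x)
  | fel8 (x : FTerm A) : EqFFEL (FTerm.and x FTerm.fls) (FTerm.and (FTerm.neg x) FTerm.fls)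
  | fel9 (x y : FTerm A) :
      EqFFEL (FTerm.or (FTerm.and x FTerm.fls) y) (FTerm.and (FTerm.or x FTerm.tru) y)
  | fel10 (x y : FTerm A) :
      EqFFEL (FTerm.or x (FTerm.and y FTerm.fls)) (FTerm.and x (FTerm.or y FTerm.tru))

/-- Derivability from EqFSCL by equational logic. -/
inductive EqFSCL {A : Type} : STerm A → STerm A → Prop
  | refl (p : STerm A) : EqFSCL p p
  | symm {p q : STerm A} : EqFSCL p q → EqFSCL q p
  | trans {p q r : STerm A} : EqFSCL p q → EqFSCL q r → EqFSCL p r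
  | neg_congr {p q : STerm A} : EqFSCL p q → EqFSCL (STerm.neg p) (STerm.neg q)
  | and_congr {p p' q q' : STerm A} :
      EqFSCL p p' → EqFSCL q q' → EqFSCL (STerm.and p q) (STerm.and p' q')
  | or_congr {p p' q q' : STerm A} :
      EqFSCL p p' → EqFSCL q q' → EqFSCL (STerm.or p q) (STerm.or p' q')
  | scl1 : EqFSCL STerm.fls (STerm.neg STerm.tru)
  | scl2 (x y : STerm A) : EqFSCL (STerm.or x y) (STerm.neg (STerm.and (STerm.neg x) (STerm.neg y)))
  | scl3 (x : STerm A) : EqFSCL (STerm.neg (STerm.neg x)) x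
  | scl4 (x y z : STerm A) : EqFSCL (STerm.and (STerm.and x y) z) (STerm.and x (STerm.and y z))
  | scl5 (x : STerm A) : EqFSCL (STerm.and STerm.tru x) x
  | scl6 (x : STerm A) : EqFSCL (STerm.and x STerm.tru) x
  | scl7 (x : STerm A) : EqFSCL (STerm.and STerm.fls x) STerm.fls
  | scl8 (x : STerm A) : EqFSCL (STerm.and x STerm.fls) (STerm.and (STerm.neg x) STerm.fls)
  | scl9 (x y : STerm A) :
      EqFSCL (STerm.or (STerm.and x STerm.fls) y) (STerm.and (STerm.or x STerm.tru) y)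
  | scl10 (x y z : STerm A) :
      EqFSCL (STerm.or (STerm.and x y) (STerm.and z STerm.fls))
             (STerm.and (STerm.or x (STerm.and z STerm.fls)) (STerm.or y (STerm.and z STerm.fls)))

/-! ### FEL Normal Form grammar -/

/-- T-terms: `P^T ::= T | a ∨• P^T`. -/
inductive IsFT_T {A : Type} : FTerm A → Prop
  | tru : IsFT_T FTerm.tru
  | or (a : A) {p : FTerm A} : IsFT_T p → IsFT_T (FTerm.or (FTerm.atom a) p)

/-- F-terms: `P^F ::= F | a ∧• P^F`. -/
inductive IsFT_F {A : Type} : FTerm A → Prop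
  | fls : IsFT_F FTerm.fls
  | and (a : A) {p : FTerm A} : IsFT_F p → IsFT_F (FTerm.and (FTerm.atom a) p)

/-- ℓ-terms: `P^ℓ ::= a ∧• P^T | ¬a ∧• P^T`. -/
inductive IsFT_L {A : Type} : FTerm A → Prop
  | pos (a : A) {p : FTerm A} : IsFT_T p → IsFT_L (FTerm.and (FTerm.atom a) p)
  | neg (a : A) {p : FTerm A} : IsFT_T p → IsFT_L (FTerm.and (FTerm.neg (FTerm.atom a)) p)

mutual
/-- `P^c ::= P^ℓ | P^* ∧• P^d`. -/
inductive IsFT_C {A : Type} : FTerm A → Prop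
  | ell {p : FTerm A} : IsFT_L p → IsFT_C p
  | and {p q : FTerm A} : IsFT_Star p → IsFT_D q → IsFT_C (FTerm.and p q)
/-- `P^d ::= P^ℓ | P^* ∨• P^c`. -/
inductive IsFT_D {A : Type} : FTerm A → Prop
  | ell {p : FTerm A} : IsFT_L p → IsFT_D p
  | or {p q : FTerm A} : IsFT_Star p → IsFT_C q → IsFT_D (FTerm.or p q)
/-- `P^* ::= P^c | P^d`. -/
inductive IsFT_Star {A : Type} : FTerm A → Prop
  | c {p : FTerm A} : IsFT_C p → IsFT_Star p
  | d {p : FTerm A} : IsFT_D p → IsFT_Star p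
end

/-- FEL Normal Form: `P ::= P^T | P^F | P^T ∧• P^*`. -/
inductive IsFNF {A : Type} : FTerm A → Prop
  | t {p : FTerm A} : IsFT_T p → IsFNF p
  | f {p : FTerm A} : IsFT_F p → IsFNF p
  | ts {p q : FTerm A} : IsFT_T p → IsFT_Star q → IsFNF (FTerm.and p q)

/-! ### SCL Normal Form grammar -/

/-- T-terms: `P^T ::= T | (a ∧◦ P^T) ∨◦ P^T`. -/
inductive IsST_T {A : Type} : STerm A → Prop
  | tru : IsST_T STerm.tru
  | or (a : A) {p q : STerm A} :
      IsST_T p → IsST_T q → IsST_T (STerm.or (STerm.and (STerm.atom a) p) q)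

/-- F-terms: `P^F ::= F | (a ∨◦ P^F) ∧◦ P^F`. -/
inductive IsST_F {A : Type} : STerm A → Prop
  | fls : IsST_F STerm.fls
  | and (a : A) {p q : STerm A} :
      IsST_F p → IsST_F q → IsST_F (STerm.and (STerm.or (STerm.atom a) p) q)

/-- ℓ-terms: `P^ℓ ::= (a ∧◦ P^T) ∨◦ P^F | (¬a ∧◦ P^T) ∨◦ P^F`. -/
inductive IsST_L {A : Type} : STerm A → Prop
  | pos (a : A) {p q : STerm A} :
      IsST_T p → IsST_F q → IsST_L (STerm.or (STerm.and (STerm.atom a) p) q)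
  | neg (a : A) {p q : STerm A} :
      IsST_T p → IsST_F q → IsST_L (STerm.or (STerm.and (STerm.neg (STerm.atom a)) p) q)

mutual
/-- `P^c ::= P^ℓ | P^* ∧◦ P^d`. -/
inductive IsST_C {A : Type} : STerm A → Prop
  | ell {p : STerm A} : IsST_L p → IsST_C p
  | and {p q : STerm A} : IsST_Star p → IsST_D q → IsST_C (STerm.and p q)
/-- `P^d ::= P^ℓ | P^* ∨◦ P^c`. -/
inductive IsST_D {A : Type} : STerm A → Prop
  | ell {p : STerm A} : IsST_L p → IsST_D p
  | or {p q : STerm A} : IsST_Star p → IsST_C q → IsST_D (STerm.or p q)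
/-- `P^* ::= P^c | P^d`. -/
inductive IsST_Star {A : Type} : STerm A → Prop
  | c {p : STerm A} : IsST_C p → IsST_Star p
  | d {p : STerm A} : IsST_D p → IsST_Star p
end

/-- SCL Normal Form: `P ::= P^T | P^F | P^T ∧◦ P^*`. -/
inductive IsSNF {A : Type} : STerm A → Prop
  | t {p : STerm A} : IsST_T p → IsSNF p
  | f {p : STerm A} : IsST_F p → IsSNF p
  | ts {p q : STerm A} : IsST_T p → IsST_Star q → IsSNF (STerm.and p q)

/-! ### Trees with box leaves -/

/-- `𝒯_□`: trees over `A` with leaves in `{T, F, □}`. -/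
inductive ETreeB (A : Type) : Type
  | tru  : ETreeB A
  | fls  : ETreeB A
  | box  : ETreeB A
  | node : ETreeB A → A → ETreeB A → ETreeB A

namespace ETreeB

/-- `X.substBox Y = X[□↦Y]`. -/
def substBox {A : Type} : ETreeB A → ETree A → ETree A
  | .tru, _ => ETree.tru
  | .fls, _ => ETree.fls
  | .box, y => y
  | .node l a r, y => ETree.node (substBox l y) a (substBox r y)

def hasBox {A : Type} : ETreeB A → Prop
  | .tru => False
  | .fls => False
  | .box => True
  | .node l _ r => hasBox l ∨ hasBox r

def hasTru {A : Type} : ETreeB A → Prop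
  | .tru => True
  | .fls => False
  | .box => False
  | .node l _ r => hasTru l ∨ hasTru r

def hasFls {A : Type} : ETreeB A → Prop
  | .tru => False
  | .fls => True
  | .box => False
  | .node l _ r => hasFls l ∨ hasFls r

end ETreeB

/-- `𝒯_{1,2}`: trees over `A` with leaves in `{T, F, □₁, □₂}`. -/
inductive ETree2 (A : Type) : Type
  | tru  : ETree2 A
  | fls  : ETree2 A
  | box1 : ETree2 A
  | box2 : ETree2 A
  | node : ETree2 A → A → ETree2 A → ETree2 A

namespace ETree2

/-- `X.substBoxes Y Z = X[□₁↦Y, □₂↦Z]`. -/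
def substBoxes {A : Type} : ETree2 A → ETree A → ETree A → ETree A
  | .tru, _, _ => ETree.tru
  | .fls, _, _ => ETree.fls
  | .box1, y, _ => y
  | .box2, _, z => z
  | .node l a r, y, z => ETree.node (substBoxes l y z) a (substBoxes r y z)

def hasBox1 {A : Type} : ETree2 A → Prop
  | .tru => False
  | .fls => False
  | .box1 => True
  | .box2 => False
  | .node l _ r => hasBox1 l ∨ hasBox1 r

def hasBox2 {A : Type} : ETree2 A → Prop
  | .tru => False
  | .fls => False
  | .box1 => False
  | .box2 => True
  | .node l _ r => hasBox2 l ∨ hasBox2 r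

def hasTru {A : Type} : ETree2 A → Prop
  | .tru => True
  | .fls => False
  | .box1 => False
  | .box2 => False
  | .node l _ r => hasTru l ∨ hasTru r

def hasFls {A : Type} : ETree2 A → Prop
  | .tru => False
  | .fls => True
  | .box1 => False
  | .box2 => False
  | .node l _ r => hasFls l ∨ hasFls r

end ETree2

namespace ETree

/-- `X[T↦□₁, F↦□₂]`. -/
def toBoxes {A : Type} : ETree A → ETree2 A
  | .tru => ETree2.box1
  | .fls => ETree2.box2
  | .node l a r => ETree2.node (toBoxes l) a (toBoxes r)

/-- `X[T↦□]`. -/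
def truToBox {A : Type} : ETree A → ETreeB A
  | .tru => ETreeB.box
  | .fls => ETreeB.fls
  | .node l a r => ETreeB.node (truToBox l) a (truToBox r)

/-- `X[F↦□]`. -/
def flsToBox {A : Type} : ETree A → ETreeB A
  | .tru => ETreeB.tru
  | .fls => ETreeB.box
  | .node l a r => ETreeB.node (flsToBox l) a (flsToBox r)

end ETree

/-! ### FEL decompositions -/

/-- Candidate conjunction decomposition (FEL):
    `X = Y[□₁↦Z, □₂↦Z[T↦F]]`, `Y` contains both boxes, neither `T` nor `F`,
    and `Z` contains both `T` and `F`. -/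
def IsCcdF {A : Type} (X : ETree A) (Y : ETree2 A) (Z : ETree A) : Prop :=
  X = Y.substBoxes Z (Z.subst ETree.fls ETree.fls) ∧
  Y.hasBox1 ∧ Y.hasBox2 ∧ ¬ Y.hasTru ∧ ¬ Y.hasFls ∧ Z.hasTru ∧ Z.hasFls

/-- Candidate disjunction decomposition (FEL):
    `X = Y[□₁↦Z[F↦T], □₂↦Z]` with the same side conditions. -/
def IsCddF {A : Type} (X : ETree A) (Y : ETree2 A) (Z : ETree A) : Prop :=
  X = Y.substBoxes (Z.subst ETree.tru ETree.tru) Z ∧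
  Y.hasBox1 ∧ Y.hasBox2 ∧ ¬ Y.hasTru ∧ ¬ Y.hasFls ∧ Z.hasTru ∧ Z.hasFls

/-- Conjunction decomposition (FEL): a ccd with `Z` of minimal depth. -/
def IsCdF {A : Type} (X : ETree A) (Y : ETree2 A) (Z : ETree A) : Prop :=
  IsCcdF X Y Z ∧ ∀ (Y' : ETree2 A) (Z' : ETree A), IsCcdF X Y' Z' → Z.depth ≤ Z'.depth

/-- Disjunction decomposition (FEL): a cdd with `Z` of minimal depth. -/
def IsDdF {A : Type} (X : ETree A) (Y : ETree2 A) (Z : ETree A) : Prop :=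
  IsCddF X Y Z ∧ ∀ (Y' : ETree2 A) (Z' : ETree A), IsCddF X Y' Z' → Z.depth ≤ Z'.depth

/-- T-*-decomposition (FEL): `X = Y[□↦Z]`, `Y` contains neither `T` nor `F`,
    and `Z` admits no nontrivial box decomposition. -/
def IsTsdF {A : Type} (X : ETree A) (Y : ETreeB A) (Z : ETree A) : Prop :=
  X = Y.substBox Z ∧ ¬ Y.hasTru ∧ ¬ Y.hasFls ∧
  ¬ ∃ (U : ETreeB A) (V : ETree A),
      Z = U.substBox V ∧ U.hasBox ∧ U ≠ ETreeB.box ∧ ¬ U.hasTru ∧ ¬ U.hasFls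

/-! ### SCL decompositions -/

/-- Candidate conjunction decomposition (SCL): `X = Y[□↦Z]`, `Y` contains `□`,
    `Y` contains `F` but not `T`, and `Z` contains both `T` and `F`. -/
def IsCcdS {A : Type} (X : ETree A) (Y : ETreeB A) (Z : ETree A) : Prop :=
  X = Y.substBox Z ∧ Y.hasBox ∧ Y.hasFls ∧ ¬ Y.hasTru ∧ Z.hasTru ∧ Z.hasFls

/-- Candidate disjunction decomposition (SCL): `X = Y[□↦Z]`, `Y` contains `□`,
    `Y` contains `T` but not `F`, and `Z` contains both `T` and `F`. -/
def IsCddS {A : Type} (X : ETree A) (Y : ETreeB A) (Z : ETree A) : Prop :=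
  X = Y.substBox Z ∧ Y.hasBox ∧ Y.hasTru ∧ ¬ Y.hasFls ∧ Z.hasTru ∧ Z.hasFls

/-- Conjunction decomposition (SCL): a ccd with `Z` of minimal depth. -/
def IsCdS {A : Type} (X : ETree A) (Y : ETreeB A) (Z : ETree A) : Prop :=
  IsCcdS X Y Z ∧ ∀ (Y' : ETreeB A) (Z' : ETree A), IsCcdS X Y' Z' → Z.depth ≤ Z'.depth

/-- Disjunction decomposition (SCL): a cdd with `Z` of minimal depth. -/
def IsDdS {A : Type} (X : ETree A) (Y : ETreeB A) (Z : ETree A) : Prop :=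
  IsCddS X Y Z ∧ ∀ (Y' : ETreeB A) (Z' : ETree A), IsCddS X Y' Z' → Z.depth ≤ Z'.depth

/-- Candidate T-*-decomposition (SCL). -/
def IsCtsdS {A : Type} (X : ETree A) (Y : ETreeB A) (Z : ETree A) : Prop :=
  X = Y.substBox Z ∧ ¬ Y.hasTru ∧ ¬ Y.hasFls ∧
  ¬ ∃ (U : ETreeB A) (V : ETree A),
      Z = U.substBox V ∧ U.hasBox ∧ U ≠ ETreeB.box ∧ ¬ U.hasTru ∧ ¬ U.hasFls

/-- T-*-decomposition (SCL): a ctsd with `Z` of minimal depth. -/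
def IsTsdS {A : Type} (X : ETree A) (Y : ETreeB A) (Z : ETree A) : Prop :=
  IsCtsdS X Y Z ∧ ∀ (Y' : ETreeB A) (Z' : ETree A), IsCtsdS X Y' Z' → Z.depth ≤ Z'.depth

/-- The translation `h : FTerm → STerm` from FEL-terms to SCL-terms. -/
def hTrans {A : Type} : FTerm A → STerm A
  | FTerm.tru => STerm.tru
  | FTerm.fls => STerm.fls
  | FTerm.atom a => STerm.atom a
  | FTerm.neg p => STerm.neg (hTrans p)
  | FTerm.and p q => STerm.and (STerm.or (hTrans p) (STerm.and (hTrans q) STerm.fls)) (hTrans q)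
  | FTerm.or p q => STerm.or (STerm.and (hTrans p) (STerm.or (hTrans q) STerm.tru)) (hTrans q)

namespace FelAux
open ETree
variable {A : Type}

@[simp] lemma hasTru_tru : (ETree.tru : ETree A).hasTru := trivial
@[simp] lemma not_hasTru_fls : ¬ (ETree.fls : ETree A).hasTru := id
@[simp] lemma hasTru_node {l r : ETree A} {a : A} :
    (ETree.node l a r).hasTru ↔ l.hasTru ∨ r.hasTru := Iff.rfl
@[simp] lemma hasFls_fls : (ETree.fls : ETree A).hasFls := trivial
@[simp] lemma not_hasFls_tru : ¬ (ETree.tru : ETree A).hasFls := id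
@[simp] lemma hasFls_node {l r : ETree A} {a : A} :
    (ETree.node l a r).hasFls ↔ l.hasFls ∨ r.hasFls := Iff.rfl
@[simp] lemma depth_tru : (ETree.tru : ETree A).depth = 0 := rfl
@[simp] lemma depth_fls : (ETree.fls : ETree A).depth = 0 := rfl
@[simp] lemma depth_node {l r : ETree A} {a : A} :
    (ETree.node l a r).depth = 1 + max l.depth r.depth := rfl
@[simp] lemma subst_tru {y z : ETree A} : (ETree.tru).subst y z = y := rfl
@[simp] lemma subst_fls {y z : ETree A} : (ETree.fls).subst y z = z := rfl
@[simp] lemma subst_node {l r y z : ETree A} {a : A} :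
    (ETree.node l a r).subst y z = .node (l.subst y z) a (r.subst y z) := rfl

abbrev nfls (X : ETree A) : ETree A := X.subst .fls .fls
abbrev ntru (X : ETree A) : ETree A := X.subst .tru .tru

def Mixed (X : ETree A) : Prop := X.hasTru ∧ X.hasFls

lemma tot : ∀ X : ETree A, X.hasTru ∨ X.hasFls := by
  intro X; induction X with
  | tru => exact Or.inl trivial
  | fls => exact Or.inr trivial
  | node l a r ihl ihr => rcases ihl with h | h
                          · exact Or.inl (Or.inl h)
                          · exact Or.inr (Or.inl h)

lemma hasTru_subst {G Y Z : ETree A} :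
    (G.subst Y Z).hasTru ↔ (G.hasTru ∧ Y.hasTru) ∨ (G.hasFls ∧ Z.hasTru) := by
  induction G with
  | tru => simp
  | fls => simp
  | node l a r ihl ihr => simp only [subst_node, hasTru_node, hasFls_node, ihl, ihr]; tauto

lemma hasFls_subst {G Y Z : ETree A} :
    (G.subst Y Z).hasFls ↔ (G.hasTru ∧ Y.hasFls) ∨ (G.hasFls ∧ Z.hasFls) := by
  induction G with
  | tru => simp
  | fls => simp
  | node l a r ihl ihr => simp only [subst_node, hasFls_node, hasTru_node, ihl, ihr]; tauto

lemma depth_subst {G Y Z : ETree A} (h : Y.depth = Z.depth) :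
    (G.subst Y Z).depth = G.depth + Y.depth := by
  induction G with
  | tru => simp
  | fls => simp [h]
  | node l a r ihl ihr => simp only [subst_node, depth_node, ihl, ihr]; omega

lemma not_hasTru_nfls (Z : ETree A) : ¬ (nfls Z).hasTru := by
  simp [nfls, hasTru_subst]
lemma hasFls_nfls (Z : ETree A) : (nfls Z).hasFls := by
  simp only [nfls, hasFls_subst]; rcases tot Z with h | h
  · exact Or.inl ⟨h, trivial⟩
  · exact Or.inr ⟨h, trivial⟩
lemma depth_nfls (Z : ETree A) : (nfls Z).depth = Z.depth := by
  simp [nfls, depth_subst (rfl : (ETree.fls (A := A)).depth = ETree.fls.depth)]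
lemma not_hasFls_ntru (Z : ETree A) : ¬ (ntru Z).hasFls := by
  simp [ntru, hasFls_subst]
lemma hasTru_ntru (Z : ETree A) : (ntru Z).hasTru := by
  simp only [ntru, hasTru_subst]; rcases tot Z with h | h
  · exact Or.inl ⟨h, trivial⟩
  · exact Or.inr ⟨h, trivial⟩
lemma depth_ntru (Z : ETree A) : (ntru Z).depth = Z.depth := by
  simp [ntru, depth_subst (rfl : (ETree.tru (A := A)).depth = ETree.tru.depth)]

lemma hasFls_substAll {G Y Z : ETree A} (hY : Y.hasFls) (hZ : Z.hasFls) :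
    (G.subst Y Z).hasFls := by
  rw [hasFls_subst]; rcases tot G with h | h
  · exact Or.inl ⟨h, hY⟩
  · exact Or.inr ⟨h, hZ⟩
lemma hasTru_substAll {G Y Z : ETree A} (hY : Y.hasTru) (hZ : Z.hasTru) :
    (G.subst Y Z).hasTru := by
  rw [hasTru_subst]; rcases tot G with h | h
  · exact Or.inl ⟨h, hY⟩
  · exact Or.inr ⟨h, hZ⟩

lemma subst_injG {Y Z : ETree A} (hne : Y ≠ Z) (hd : Y.depth = Z.depth) :
    ∀ {G G' : ETree A}, G.subst Y Z = G'.subst Y Z → G = G' := by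
  intro G
  induction G with
  | tru =>
    intro G' h
    cases G' with
    | tru => rfl
    | fls => exact absurd h hne
    | node l a r =>
      exfalso
      have := congrArg ETree.depth h
      rw [subst_tru, subst_node, depth_node, depth_subst hd, depth_subst hd] at this
      omega
  | fls =>
    intro G' h
    cases G' with
    | tru => exact absurd h.symm hne
    | fls => rfl
    | node l a r =>
      exfalso
      have := congrArg ETree.depth h
      rw [subst_fls, subst_node, depth_node, depth_subst hd, depth_subst hd] at this
      omega
  | node l a r ihl ihr =>
    intro G' h
    cases G' with
    | tru =>
      exfalso
      have := congrArg ETree.depth h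
      rw [subst_tru, subst_node, depth_node, depth_subst hd, depth_subst hd] at this
      omega
    | fls =>
      exfalso
      have := congrArg ETree.depth h
      rw [subst_fls, subst_node, depth_node, depth_subst hd, depth_subst hd] at this
      omega
    | node l' a' r' =>
      simp only [subst_node, ETree.node.injEq] at h
      exact by rw [ihl h.1, h.2.1, ihr h.2.2]

inductive Sub : ETree A → ETree A → Prop
  | refl (X : ETree A) : Sub X X
  | left {S l r : ETree A} (a : A) : Sub S l → Sub S (.node l a r)
  | right {S l r : ETree A} (a : A) : Sub S r → Sub S (.node l a r)

lemma Sub.trans {S W V : ETree A} (h1 : Sub S W) (h2 : Sub W V) : Sub S V := by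
  induction h2 with
  | refl => exact h1
  | left a _ ih => exact Sub.left a ih
  | right a _ ih => exact Sub.right a ih

lemma Sub.depth_le {S W : ETree A} (h : Sub S W) : S.depth ≤ W.depth := by
  induction h with
  | refl => exact le_refl _
  | left a _ ih => simp only [depth_node]; omega
  | right a _ ih => simp only [depth_node]; omega

lemma Sub.eq_of_depth {S W : ETree A} (h : Sub S W) (hd : S.depth = W.depth) : S = W := by
  induction h with
  | refl => rfl
  | left a hs ih =>
    exfalso; have := hs.depth_le; simp only [depth_node] at hd; omega
  | right a hs ih =>
    exfalso; have := hs.depth_le; simp only [depth_node] at hd; omega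

lemma Sub.hasTru_up {S W : ETree A} (h : Sub S W) (ht : S.hasTru) : W.hasTru := by
  induction h with
  | refl => exact ht
  | left a _ ih => exact Or.inl ih
  | right a _ ih => exact Or.inr ih

lemma Sub.hasFls_up {S W : ETree A} (h : Sub S W) (ht : S.hasFls) : W.hasFls := by
  induction h with
  | refl => exact ht
  | left a _ ih => exact Or.inl ih
  | right a _ ih => exact Or.inr ih

lemma sub_node_inv {S l r : ETree A} {a : A} (h : Sub S (.node l a r)) :
    S = .node l a r ∨ Sub S l ∨ Sub S r := by
  cases h with
  | refl => exact Or.inl rfl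
  | left a hs => exact Or.inr (Or.inl hs)
  | right a hs => exact Or.inr (Or.inr hs)

lemma sub_subst {S G Y Z : ETree A} (h : Sub S G) :
    Sub (S.subst Y Z) (G.subst Y Z) := by
  induction h with
  | refl => exact Sub.refl _
  | left a _ ih => exact Sub.left a ih
  | right a _ ih => exact Sub.right a ih

lemma sub_subst_cases {S G Y Z : ETree A} (h : Sub S (G.subst Y Z)) :
    (∃ G', Sub G' G ∧ S = G'.subst Y Z) ∨ (G.hasTru ∧ Sub S Y) ∨ (G.hasFls ∧ Sub S Z) := by
  induction G with
  | tru => exact Or.inr (Or.inl ⟨trivial, h⟩)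
  | fls => exact Or.inr (Or.inr ⟨trivial, h⟩)
  | node l a r ihl ihr =>
    rw [subst_node] at h
    rcases sub_node_inv h with hEq | hs | hs
    · exact Or.inl ⟨.node l a r, Sub.refl _, hEq⟩
    · rcases ihl hs with ⟨G', h1, h2⟩ | ⟨h1, h2⟩ | ⟨h1, h2⟩
      · exact Or.inl ⟨G', Sub.left a h1, h2⟩
      · exact Or.inr (Or.inl ⟨Or.inl h1, h2⟩)
      · exact Or.inr (Or.inr ⟨Or.inl h1, h2⟩)
    · rcases ihr hs with ⟨G', h1, h2⟩ | ⟨h1, h2⟩ | ⟨h1, h2⟩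
      · exact Or.inl ⟨G', Sub.right a h1, h2⟩
      · exact Or.inr (Or.inl ⟨Or.inr h1, h2⟩)
      · exact Or.inr (Or.inr ⟨Or.inr h1, h2⟩)

def hasTruB : ETree A → Bool
  | .tru => true
  | .fls => false
  | .node l _ r => hasTruB l || hasTruB r

lemma hasTruB_iff {X : ETree A} : hasTruB X = true ↔ X.hasTru := by
  induction X with
  | tru => simp [hasTruB]
  | fls => simp [hasTruB]
  | node l a r ihl ihr => simp [hasTruB, ihl, ihr]

def hasFlsB : ETree A → Bool
  | .tru => false
  | .fls => true
  | .node l _ r => hasFlsB l || hasFlsB r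

lemma hasFlsB_iff {X : ETree A} : hasFlsB X = true ↔ X.hasFls := by
  induction X with
  | tru => simp [hasFlsB]
  | fls => simp [hasFlsB]
  | node l a r ihl ihr => simp [hasFlsB, ihl, ihr]

/-- depth of the deepest subtree without T-leaves -/
def fdep : ETree A → ℕ
  | .tru => 0
  | .fls => 0
  | .node l a r => if hasTruB l || hasTruB r then max (fdep l) (fdep r)
                   else (ETree.node l a r).depth

/-- depth of the deepest subtree without F-leaves -/
def tdep : ETree A → ℕ
  | .tru => 0
  | .fls => 0
  | .node l a r => if hasFlsB l || hasFlsB r then max (tdep l) (tdep r)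
                   else (ETree.node l a r).depth

lemma fdep_le_depth : ∀ X : ETree A, fdep X ≤ X.depth := by
  intro X; induction X with
  | tru => simp [fdep]
  | fls => simp [fdep]
  | node l a r ihl ihr =>
    rw [fdep]; split
    · simp only [depth_node]; omega
    · exact le_refl _

lemma tdep_le_depth : ∀ X : ETree A, tdep X ≤ X.depth := by
  intro X; induction X with
  | tru => simp [tdep]
  | fls => simp [tdep]
  | node l a r ihl ihr =>
    rw [tdep]; split
    · simp only [depth_node]; omega
    · exact le_refl _

lemma fdep_eq_depth_of_not_hasTru {X : ETree A} (h : ¬ X.hasTru) : fdep X = X.depth := by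
  cases X with
  | tru => exact absurd trivial h
  | fls => rfl
  | node l a r =>
    rw [fdep, if_neg]
    simp only [hasTru_node] at h
    simp only [Bool.or_eq_true, hasTruB_iff]
    exact h

lemma tdep_eq_depth_of_not_hasFls {X : ETree A} (h : ¬ X.hasFls) : tdep X = X.depth := by
  cases X with
  | tru => rfl
  | fls => exact absurd trivial h
  | node l a r =>
    rw [tdep, if_neg]
    simp only [hasFls_node] at h
    simp only [Bool.or_eq_true, hasFlsB_iff]
    exact h

lemma fdep_zero_of_not_hasFls {X : ETree A} (h : ¬ X.hasFls) : fdep X = 0 := by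
  induction X with
  | tru => rfl
  | fls => exact absurd trivial h
  | node l a r ihl ihr =>
    simp only [hasFls_node] at h
    push_neg at h
    have hl := ihl h.1
    have hr := ihr h.2
    rw [fdep, if_pos, hl, hr]
    · simp
    · simp only [Bool.or_eq_true, hasTruB_iff]
      exact Or.inl ((tot l).resolve_right h.1)

lemma tdep_zero_of_not_hasTru {X : ETree A} (h : ¬ X.hasTru) : tdep X = 0 := by
  induction X with
  | tru => exact absurd trivial h
  | fls => rfl
  | node l a r ihl ihr =>
    simp only [hasTru_node] at h
    push_neg at h
    have hl := ihl h.1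
    have hr := ihr h.2
    rw [tdep, if_pos, hl, hr]
    · simp
    · simp only [Bool.or_eq_true, hasFlsB_iff]
      exact Or.inl ((tot l).resolve_left h.1)

lemma fdep_lt_depth {X : ETree A} (hT : X.hasTru) (hF : X.hasFls) : fdep X < X.depth := by
  cases X with
  | tru => exact absurd hF not_hasFls_tru
  | fls => exact absurd hT not_hasTru_fls
  | node l a r =>
    rw [fdep, if_pos]
    · have h1 := fdep_le_depth l
      have h2 := fdep_le_depth r
      simp only [depth_node]; omega
    · simp only [Bool.or_eq_true, hasTruB_iff]
      exact hT

lemma tdep_lt_depth {X : ETree A} (hT : X.hasTru) (hF : X.hasFls) : tdep X < X.depth := by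
  cases X with
  | tru => exact absurd hF not_hasFls_tru
  | fls => exact absurd hT not_hasTru_fls
  | node l a r =>
    rw [tdep, if_pos]
    · have h1 := tdep_le_depth l
      have h2 := tdep_le_depth r
      simp only [depth_node]; omega
    · simp only [Bool.or_eq_true, hasFlsB_iff]
      exact hF

lemma fdep_child_le_left {l r : ETree A} {a : A} : fdep l ≤ fdep (.node l a r) := by
  rw [fdep]; split
  · omega
  · have := fdep_le_depth l; simp only [depth_node]; omega

lemma fdep_child_le_right {l r : ETree A} {a : A} : fdep r ≤ fdep (.node l a r) := by
  rw [fdep]; split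
  · omega
  · have := fdep_le_depth r; simp only [depth_node]; omega

lemma tdep_child_le_left {l r : ETree A} {a : A} : tdep l ≤ tdep (.node l a r) := by
  rw [tdep]; split
  · omega
  · have := tdep_le_depth l; simp only [depth_node]; omega

lemma tdep_child_le_right {l r : ETree A} {a : A} : tdep r ≤ tdep (.node l a r) := by
  rw [tdep]; split
  · omega
  · have := tdep_le_depth r; simp only [depth_node]; omega

lemma fdep_ge {X S : ETree A} (hs : Sub S X) (h : ¬ S.hasTru) : S.depth ≤ fdep X := by
  induction hs with
  | refl => rw [fdep_eq_depth_of_not_hasTru h]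
  | left a _ ih => exact le_trans ih fdep_child_le_left
  | right a _ ih => exact le_trans ih fdep_child_le_right

lemma tdep_ge {X S : ETree A} (hs : Sub S X) (h : ¬ S.hasFls) : S.depth ≤ tdep X := by
  induction hs with
  | refl => rw [tdep_eq_depth_of_not_hasFls h]
  | left a _ ih => exact le_trans ih tdep_child_le_left
  | right a _ ih => exact le_trans ih tdep_child_le_right

lemma exists_fdep {X : ETree A} (h : X.hasFls) :
    ∃ S, Sub S X ∧ ¬ S.hasTru ∧ S.depth = fdep X := by
  induction X with
  | tru => exact absurd h not_hasFls_tru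
  | fls => exact ⟨.fls, Sub.refl _, id, rfl⟩
  | node l a r ihl ihr =>
    by_cases hT : (ETree.node l a r).hasTru
    · have hcond : (hasTruB l || hasTruB r) = true := by
        simp only [Bool.or_eq_true, hasTruB_iff]; exact hT
      by_cases hl : l.hasFls
      · by_cases hr : r.hasFls
        · obtain ⟨Sl, hSl, hSlT, hSld⟩ := ihl hl
          obtain ⟨Sr, hSr, hSrT, hSrd⟩ := ihr hr
          rcases le_total (fdep l) (fdep r) with hle | hle
          · exact ⟨Sr, Sub.right a hSr, hSrT, by rw [fdep, if_pos hcond]; omega⟩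
          · exact ⟨Sl, Sub.left a hSl, hSlT, by rw [fdep, if_pos hcond]; omega⟩
        · obtain ⟨Sl, hSl, hSlT, hSld⟩ := ihl hl
          have h0 := fdep_zero_of_not_hasFls hr
          exact ⟨Sl, Sub.left a hSl, hSlT, by rw [fdep, if_pos hcond]; omega⟩
      · have hr : r.hasFls := by
          rcases h with h | h
          · exact absurd h hl
          · exact h
        obtain ⟨Sr, hSr, hSrT, hSrd⟩ := ihr hr
        have h0 := fdep_zero_of_not_hasFls hl
        exact ⟨Sr, Sub.right a hSr, hSrT, by rw [fdep, if_pos hcond]; omega⟩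
    · exact ⟨.node l a r, Sub.refl _, hT, (fdep_eq_depth_of_not_hasTru hT).symm⟩

lemma exists_tdep {X : ETree A} (h : X.hasTru) :
    ∃ S, Sub S X ∧ ¬ S.hasFls ∧ S.depth = tdep X := by
  induction X with
  | tru => exact ⟨.tru, Sub.refl _, id, rfl⟩
  | fls => exact absurd h not_hasTru_fls
  | node l a r ihl ihr =>
    by_cases hF : (ETree.node l a r).hasFls
    · have hcond : (hasFlsB l || hasFlsB r) = true := by
        simp only [Bool.or_eq_true, hasFlsB_iff]; exact hF
      by_cases hl : l.hasTru
      · by_cases hr : r.hasTru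
        · obtain ⟨Sl, hSl, hSlT, hSld⟩ := ihl hl
          obtain ⟨Sr, hSr, hSrT, hSrd⟩ := ihr hr
          rcases le_total (tdep l) (tdep r) with hle | hle
          · exact ⟨Sr, Sub.right a hSr, hSrT, by rw [tdep, if_pos hcond]; omega⟩
          · exact ⟨Sl, Sub.left a hSl, hSlT, by rw [tdep, if_pos hcond]; omega⟩
        · obtain ⟨Sl, hSl, hSlT, hSld⟩ := ihl hl
          have h0 := tdep_zero_of_not_hasTru hr
          exact ⟨Sl, Sub.left a hSl, hSlT, by rw [tdep, if_pos hcond]; omega⟩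
      · have hr : r.hasTru := by
          rcases h with h | h
          · exact absurd h hl
          · exact h
        obtain ⟨Sr, hSr, hSrT, hSrd⟩ := ihr hr
        have h0 := tdep_zero_of_not_hasTru hl
        exact ⟨Sr, Sub.right a hSr, hSrT, by rw [tdep, if_pos hcond]; omega⟩
    · exact ⟨.node l a r, Sub.refl _, hF, (tdep_eq_depth_of_not_hasFls hF).symm⟩
/-- X is built by hanging copies of Z and Z[T↦F] -/
inductive CompB (Z : ETree A) : ETree A → Prop
  | base : CompB Z Z
  | nbase : CompB Z (nfls Z)
  | comp {l r : ETree A} (a : A) : CompB Z l → CompB Z r → CompB Z (.node l a r)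

/-- X is built by hanging copies of Z[F↦T] and Z -/
inductive CompD (Z : ETree A) : ETree A → Prop
  | base : CompD Z Z
  | nbase : CompD Z (ntru Z)
  | comp {l r : ETree A} (a : A) : CompD Z l → CompD Z r → CompD Z (.node l a r)

/-- X is tiled by copies of S only -/
inductive Comp1 (S : ETree A) : ETree A → Prop
  | base : Comp1 S S
  | comp {l r : ETree A} (a : A) : Comp1 S l → Comp1 S r → Comp1 S (.node l a r)

def NCB (Z X : ETree A) : Prop := ∃ l a r, X = .node l a r ∧ CompB Z l ∧ CompB Z r
def NCD (Z X : ETree A) : Prop := ∃ l a r, X = .node l a r ∧ CompD Z l ∧ CompD Z r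
def NOTILE (G : ETree A) : Prop :=
  ∀ S l a r, Mixed S → G = .node l a r → Comp1 S l → Comp1 S r → False

lemma compB_inv {Z W : ETree A} (h : CompB Z W) :
    W = Z ∨ W = nfls Z ∨ ∃ l a r, W = .node l a r ∧ CompB Z l ∧ CompB Z r := by
  cases h with
  | base => exact Or.inl rfl
  | nbase => exact Or.inr (Or.inl rfl)
  | comp a hl hr => exact Or.inr (Or.inr ⟨_, _, _, rfl, hl, hr⟩)

lemma compD_inv {Z W : ETree A} (h : CompD Z W) :
    W = Z ∨ W = ntru Z ∨ ∃ l a r, W = .node l a r ∧ CompD Z l ∧ CompD Z r := by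
  cases h with
  | base => exact Or.inl rfl
  | nbase => exact Or.inr (Or.inl rfl)
  | comp a hl hr => exact Or.inr (Or.inr ⟨_, _, _, rfl, hl, hr⟩)

lemma comp1_inv {S W : ETree A} (h : Comp1 S W) :
    W = S ∨ ∃ l a r, W = .node l a r ∧ Comp1 S l ∧ Comp1 S r := by
  cases h with
  | base => exact Or.inl rfl
  | comp a hl hr => exact Or.inr ⟨_, _, _, rfl, hl, hr⟩

lemma comp1_compB {S W : ETree A} (h : Comp1 S W) : CompB S W := by
  induction h with
  | base => exact CompB.base
  | comp a _ _ ihl ihr => exact CompB.comp a ihl ihr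

lemma comp1_compD {S W : ETree A} (h : Comp1 S W) : CompD S W := by
  induction h with
  | base => exact CompD.base
  | comp a _ _ ihl ihr => exact CompD.comp a ihl ihr

lemma CompD.hasTru' {Z W : ETree A} (hZ : Z.hasTru) (h : CompD Z W) : W.hasTru := by
  induction h with
  | base => exact hZ
  | nbase => exact hasTru_ntru Z
  | comp a _ _ ihl ihr => exact Or.inl ihl

lemma CompB.hasFls' {Z W : ETree A} (hZ : Z.hasFls) (h : CompB Z W) : W.hasFls := by
  induction h with
  | base => exact hZ
  | nbase => exact hasFls_nfls Z
  | comp a _ _ ihl ihr => exact Or.inl ihl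

lemma CompD.depth_ge {Z W : ETree A} (h : CompD Z W) : Z.depth ≤ W.depth := by
  induction h with
  | base => exact le_refl _
  | nbase => rw [depth_ntru]
  | comp a _ _ ihl ihr => simp only [depth_node]; omega

lemma CompB.depth_ge {Z W : ETree A} (h : CompB Z W) : Z.depth ≤ W.depth := by
  induction h with
  | base => exact le_refl _
  | nbase => rw [depth_nfls]
  | comp a _ _ ihl ihr => simp only [depth_node]; omega

lemma CompD.sub_of_hasFls {Z W : ETree A} (h : CompD Z W) (hF : W.hasFls) : Sub Z W := by
  induction h with
  | base => exact Sub.refl _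
  | nbase => exact absurd hF (not_hasFls_ntru Z)
  | comp a _ _ ihl ihr =>
    rcases hF with hF | hF
    · exact Sub.left a (ihl hF)
    · exact Sub.right a (ihr hF)

lemma CompB.sub_of_hasTru {Z W : ETree A} (h : CompB Z W) (hT : W.hasTru) : Sub Z W := by
  induction h with
  | base => exact Sub.refl _
  | nbase => exact absurd hT (not_hasTru_nfls Z)
  | comp a _ _ ihl ihr =>
    rcases hT with hT | hT
    · exact Sub.left a (ihl hT)
    · exact Sub.right a (ihr hT)

/-- any all-F subtree of a CompD-composed tree sits strictly inside a copy of Z -/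
lemma CompD.allF {Z W S : ETree A} (hZ : Z.hasTru) (h : CompD Z W)
    (hs : Sub S W) (hS : ¬ S.hasTru) : Sub S Z ∧ S.depth < Z.depth := by
  induction h with
  | base =>
    refine ⟨hs, ?_⟩
    rcases lt_or_eq_of_le hs.depth_le with hlt | heq
    · exact hlt
    · exact absurd (hs.eq_of_depth heq ▸ hZ) hS
  | nbase =>
    exfalso
    rcases tot S with hT | hF
    · exact hS hT
    · exact not_hasFls_ntru Z (hs.hasFls_up hF)
  | comp a hl hr ihl ihr =>
    rcases sub_node_inv hs with hEq | hsub | hsub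
    · exact absurd (hEq ▸ Or.inl (hl.hasTru' hZ) : S.hasTru) hS
    · exact ihl hsub
    · exact ihr hsub

/-- any all-T subtree of a CompB-composed tree sits strictly inside a copy of Z -/
lemma CompB.allT {Z W S : ETree A} (hZ : Z.hasFls) (h : CompB Z W)
    (hs : Sub S W) (hS : ¬ S.hasFls) : Sub S Z ∧ S.depth < Z.depth := by
  induction h with
  | base =>
    refine ⟨hs, ?_⟩
    rcases lt_or_eq_of_le hs.depth_le with hlt | heq
    · exact hlt
    · exact absurd (hs.eq_of_depth heq ▸ hZ) hS
  | nbase =>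
    exfalso
    rcases tot S with hT | hF
    · exact not_hasTru_nfls Z (hs.hasTru_up hT)
    · exact hS hF
  | comp a hl hr ihl ihr =>
    rcases sub_node_inv hs with hEq | hsub | hsub
    · exact absurd (hEq ▸ Or.inl (hl.hasFls' hZ) : S.hasFls) hS
    · exact ihl hsub
    · exact ihr hsub
/-- location lemma: a T-containing subtree of a conjunction-shaped tree which contains
    an all-F subtree of maximal possible depth must be aligned with the G-part -/
lemma locF {G H Z S : ETree A} (hHt : H.hasTru) (hHf : H.hasFls)
    (hZt : Z.hasTru)
    (hsub : Sub Z (G.subst H (nfls H)))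
    (hS : Sub S Z) (hSnt : ¬ S.hasTru) (hSd : fdep G + H.depth ≤ S.depth) :
    ∃ G', Sub G' G ∧ Z = G'.subst H (nfls H) ∧ G'.hasTru ∧ G'.hasFls := by
  have hfd : fdep H < H.depth := fdep_lt_depth hHt hHf
  rcases sub_subst_cases hsub with ⟨G', hG', hZeq⟩ | ⟨hGt, hZH⟩ | ⟨hGf, hZH⟩
  · subst hZeq
    refine ⟨G', hG', rfl, ?_, ?_⟩
    · rcases hasTru_subst.mp hZt with ⟨h, _⟩ | ⟨_, h⟩
      · exact h
      · exact absurd h (not_hasTru_nfls H)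
    · rcases sub_subst_cases hS with ⟨G'', hG'', hSeq⟩ | ⟨_, hSH⟩ | ⟨hF, _⟩
      · subst hSeq
        have hnt : ¬ G''.hasTru := fun ht => hSnt (hasTru_subst.mpr (Or.inl ⟨ht, hHt⟩))
        exact hG''.hasFls_up ((tot G'').resolve_left hnt)
      · have h1 : S.depth ≤ fdep H := fdep_ge hSH hSnt
        omega
      · exact hF
  · have h1 : S.depth ≤ fdep H := fdep_ge (hS.trans hZH) hSnt
    omega
  · exact absurd (hZH.hasTru_up hZt) (not_hasTru_nfls H)

lemma locT {G H Z S : ETree A} (hHt : H.hasTru) (hHf : H.hasFls)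
    (hZf : Z.hasFls)
    (hsub : Sub Z (G.subst (ntru H) H))
    (hS : Sub S Z) (hSnf : ¬ S.hasFls) (hSd : tdep G + H.depth ≤ S.depth) :
    ∃ G', Sub G' G ∧ Z = G'.subst (ntru H) H ∧ G'.hasTru ∧ G'.hasFls := by
  have hfd : tdep H < H.depth := tdep_lt_depth hHt hHf
  rcases sub_subst_cases hsub with ⟨G', hG', hZeq⟩ | ⟨hGt, hZH⟩ | ⟨hGf, hZH⟩
  · subst hZeq
    refine ⟨G', hG', rfl, ?_, ?_⟩
    · rcases sub_subst_cases hS with ⟨G'', hG'', hSeq⟩ | ⟨hT, _⟩ | ⟨_, hSH⟩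
      · subst hSeq
        have hnf : ¬ G''.hasFls := fun ht => hSnf (hasFls_subst.mpr (Or.inr ⟨ht, hHf⟩))
        exact hG''.hasTru_up ((tot G'').resolve_right hnf)
      · exact hT
      · have h1 : S.depth ≤ tdep H := tdep_ge hSH hSnf
        omega
    · rcases hasFls_subst.mp hZf with ⟨_, h⟩ | ⟨h, _⟩
      · exact absurd h (not_hasFls_ntru H)
      · exact h
  · exact absurd (hZH.hasFls_up hZf) (not_hasFls_ntru H)
  · have h1 : S.depth ≤ tdep H := tdep_ge (hS.trans hZH) hSnf
    omega

/-- a composition of a conjunction-shaped tree by an aligned piece descends to the G-part -/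
lemma transferD {H G' Z : ETree A} (hHt : H.hasTru) (hHf : H.hasFls)
    (hZ : Z = G'.subst H (nfls H)) (hG'd : 1 ≤ G'.depth) (hG't : G'.hasTru) :
    ∀ G0, CompD Z (G0.subst H (nfls H)) → Comp1 G' G0 := by
  have hne : H ≠ nfls H := fun h => not_hasTru_nfls H (h ▸ hHt)
  have hd : H.depth = (nfls H).depth := (depth_nfls H).symm
  have hZd : Z.depth = G'.depth + H.depth := by rw [hZ, depth_subst hd]
  have hZt : Z.hasTru := hZ ▸ hasTru_subst.mpr (Or.inl ⟨hG't, hHt⟩)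
  intro G0
  induction G0 with
  | tru =>
    intro h
    rw [subst_tru] at h
    exfalso
    rcases compD_inv h with hEq | hEq | ⟨l, a, r, hEq, hl, _⟩
    · have := congrArg ETree.depth hEq
      omega
    · exact not_hasFls_ntru Z (hEq ▸ hHf)
    · have h1 : Z.depth ≤ l.depth := hl.depth_ge
      have h2 := congrArg ETree.depth hEq
      rw [depth_node] at h2
      omega
  | fls =>
    intro h
    rw [subst_fls] at h
    exfalso
    rcases compD_inv h with hEq | hEq | ⟨l, a, r, hEq, hl, _⟩
    · exact not_hasTru_nfls H (hEq ▸ hZt)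
    · exact not_hasTru_nfls H (hEq ▸ hasTru_ntru Z)
    · exact not_hasTru_nfls H (hEq ▸ (Or.inl (hl.hasTru' hZt) : (ETree.node l a r).hasTru))
  | node l a r ihl ihr =>
    intro h
    rw [subst_node] at h
    rcases compD_inv h with hEq | hEq | ⟨l', a', r', hEq, hl', hr'⟩
    · rw [hZ] at hEq
      have heq2 : (ETree.node l a r).subst H (nfls H) = G'.subst H (nfls H) := by
        rw [subst_node]; exact hEq
      rw [subst_injG hne hd heq2]
      exact Comp1.base
    · have hf : ((ETree.node l a r).subst H (nfls H)).hasFls :=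
        hasFls_substAll hHf (hasFls_nfls H)
      rw [subst_node, hEq] at hf
      exact absurd hf (not_hasFls_ntru Z)
    · injection hEq with e1 e2 e3
      subst e1; subst e3
      exact Comp1.comp a (ihl hl') (ihr hr')

lemma transferB {H G' Z : ETree A} (hHt : H.hasTru) (hHf : H.hasFls)
    (hZ : Z = G'.subst (ntru H) H) (hG'd : 1 ≤ G'.depth) (hG'f : G'.hasFls) :
    ∀ G0, CompB Z (G0.subst (ntru H) H) → Comp1 G' G0 := by
  have hne : ntru H ≠ H := fun h => not_hasFls_ntru H (h.symm ▸ hHf)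
  have hd : (ntru H).depth = H.depth := depth_ntru H
  have hZd : Z.depth = G'.depth + H.depth := by rw [hZ, depth_subst hd, depth_ntru]
  have hZf : Z.hasFls := hZ ▸ hasFls_subst.mpr (Or.inr ⟨hG'f, hHf⟩)
  intro G0
  induction G0 with
  | fls =>
    intro h
    rw [subst_fls] at h
    exfalso
    rcases compB_inv h with hEq | hEq | ⟨l, a, r, hEq, hl, _⟩
    · have := congrArg ETree.depth hEq
      omega
    · exact not_hasTru_nfls Z (hEq ▸ hHt)
    · have h1 : Z.depth ≤ l.depth := hl.depth_ge
      have h2 := congrArg ETree.depth hEq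
      rw [depth_node] at h2
      omega
  | tru =>
    intro h
    rw [subst_tru] at h
    exfalso
    rcases compB_inv h with hEq | hEq | ⟨l, a, r, hEq, hl, _⟩
    · exact not_hasFls_ntru H (hEq ▸ hZf)
    · exact not_hasFls_ntru H (hEq ▸ hasFls_nfls Z)
    · exact not_hasFls_ntru H (hEq ▸ (Or.inl (hl.hasFls' hZf) : (ETree.node l a r).hasFls))
  | node l a r ihl ihr =>
    intro h
    rw [subst_node] at h
    rcases compB_inv h with hEq | hEq | ⟨l', a', r', hEq, hl', hr'⟩
    · rw [hZ] at hEq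
      have heq2 : (ETree.node l a r).subst (ntru H) H = G'.subst (ntru H) H := by
        rw [subst_node]; exact hEq
      rw [subst_injG hne hd heq2]
      exact Comp1.base
    · have hf : ((ETree.node l a r).subst (ntru H) H).hasTru :=
        hasTru_substAll (hasTru_ntru H) hHt
      rw [subst_node, hEq] at hf
      exact absurd hf (not_hasTru_nfls Z)
    · injection hEq with e1 e2 e3
      subst e1; subst e3
      exact Comp1.comp a (ihl hl') (ihr hr')
/-- no nontrivial disjunction composition of a conjunction-shaped tree -/
lemma mainConj {G H : ETree A} (hNT : NOTILE G) (hGt : G.hasTru) (hGf : G.hasFls)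
    (hHt : H.hasTru) (hHf : H.hasFls) :
    ∀ Z, Mixed Z → ¬ NCD Z (G.subst H (nfls H)) := by
  rintro Z ⟨hZt, hZf⟩ ⟨x1, a, x2, hX, h1, h2⟩
  cases G with
  | tru => exact hGf
  | fls => exact hGt
  | node g1 c g2 =>
  rw [subst_node] at hX
  injection hX with e1 e2 e3
  subst e1; subst e3
  obtain ⟨S0, hS0sub, hS0nt, hS0d⟩ := exists_fdep hGf
  set Sstar := S0.subst H (nfls H) with hSdef
  have hSnt : ¬ Sstar.hasTru := by
    rw [hSdef, hasTru_subst]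
    rintro (⟨h, _⟩ | ⟨_, h⟩)
    · exact hS0nt h
    · exact not_hasTru_nfls H h
  have hSd : Sstar.depth = fdep (ETree.node g1 c g2) + H.depth := by
    rw [hSdef, depth_subst (depth_nfls H).symm, hS0d]
  have hSsub : Sub Sstar ((ETree.node g1 c g2).subst H (nfls H)) := sub_subst hS0sub
  rw [subst_node] at hSsub
  have hXt : ((ETree.node g1 c g2).subst H (nfls H)).hasTru :=
    hasTru_subst.mpr (Or.inl ⟨hGt, hHt⟩)
  rw [subst_node] at hXt
  have key : ∀ x, CompD Z x → Sub Sstar x →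
      Sub x (ETree.node (g1.subst H (nfls H)) c (g2.subst H (nfls H))) →
      ∃ G', Sub G' (ETree.node g1 c g2) ∧ Z = G'.subst H (nfls H) ∧
        G'.hasTru ∧ G'.hasFls ∧ 1 ≤ G'.depth := by
    intro x hC hs hxX
    obtain ⟨hSZ, hlt⟩ := hC.allF hZt hs hSnt
    have hZx : Sub Z x := hC.sub_of_hasFls (hs.hasFls_up ((tot Sstar).resolve_left hSnt))
    have hZX : Sub Z ((ETree.node g1 c g2).subst H (nfls H)) := by
      rw [subst_node]; exact hZx.trans hxX
    obtain ⟨G', hG'sub, hZeq, hG't, hG'f⟩ :=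
      locF hHt hHf hZt hZX hSZ hSnt (by omega)
    have hZd : Z.depth = G'.depth + H.depth := by
      rw [hZeq, depth_subst (depth_nfls H).symm]
    exact ⟨G', hG'sub, hZeq, hG't, hG'f, by omega⟩
  have hG'pack : ∃ G', Sub G' (ETree.node g1 c g2) ∧ Z = G'.subst H (nfls H) ∧
      G'.hasTru ∧ G'.hasFls ∧ 1 ≤ G'.depth := by
    rcases sub_node_inv hSsub with hEq | hsub | hsub
    · exact absurd (hEq ▸ hXt) hSnt
    · exact key _ h1 hsub (Sub.left c (Sub.refl _))
    · exact key _ h2 hsub (Sub.right c (Sub.refl _))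
  obtain ⟨G', hG'sub, hZeq, hG't, hG'f, hG'd⟩ := hG'pack
  exact hNT G' g1 c g2 ⟨hG't, hG'f⟩ rfl
    (transferD hHt hHf hZeq hG'd hG't g1 h1)
    (transferD hHt hHf hZeq hG'd hG't g2 h2)

/-- no nontrivial conjunction composition of a disjunction-shaped tree -/
lemma mainDisj {G H : ETree A} (hNT : NOTILE G) (hGt : G.hasTru) (hGf : G.hasFls)
    (hHt : H.hasTru) (hHf : H.hasFls) :
    ∀ Z, Mixed Z → ¬ NCB Z (G.subst (ntru H) H) := by
  rintro Z ⟨hZt, hZf⟩ ⟨x1, a, x2, hX, h1, h2⟩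
  cases G with
  | tru => exact hGf
  | fls => exact hGt
  | node g1 c g2 =>
  rw [subst_node] at hX
  injection hX with e1 e2 e3
  subst e1; subst e3
  obtain ⟨S0, hS0sub, hS0nf, hS0d⟩ := exists_tdep hGt
  set Sstar := S0.subst (ntru H) H with hSdef
  have hSnf : ¬ Sstar.hasFls := by
    rw [hSdef, hasFls_subst]
    rintro (⟨_, h⟩ | ⟨h, _⟩)
    · exact not_hasFls_ntru H h
    · exact hS0nf h
  have hSd : Sstar.depth = tdep (ETree.node g1 c g2) + H.depth := by
    rw [hSdef, depth_subst (depth_ntru H), hS0d, depth_ntru]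
  have hSsub : Sub Sstar ((ETree.node g1 c g2).subst (ntru H) H) := sub_subst hS0sub
  rw [subst_node] at hSsub
  have hXf : ((ETree.node g1 c g2).subst (ntru H) H).hasFls :=
    hasFls_subst.mpr (Or.inr ⟨hGf, hHf⟩)
  rw [subst_node] at hXf
  have key : ∀ x, CompB Z x → Sub Sstar x →
      Sub x (ETree.node (g1.subst (ntru H) H) c (g2.subst (ntru H) H)) →
      ∃ G', Sub G' (ETree.node g1 c g2) ∧ Z = G'.subst (ntru H) H ∧
        G'.hasTru ∧ G'.hasFls ∧ 1 ≤ G'.depth := by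
    intro x hC hs hxX
    obtain ⟨hSZ, hlt⟩ := hC.allT hZf hs hSnf
    have hZx : Sub Z x := hC.sub_of_hasTru (hs.hasTru_up ((tot Sstar).resolve_right hSnf))
    have hZX : Sub Z ((ETree.node g1 c g2).subst (ntru H) H) := by
      rw [subst_node]; exact hZx.trans hxX
    obtain ⟨G', hG'sub, hZeq, hG't, hG'f⟩ :=
      locT hHt hHf hZf hZX hSZ hSnf (by omega)
    have hZd : Z.depth = G'.depth + H.depth := by
      rw [hZeq, depth_subst (depth_ntru H), depth_ntru]
    exact ⟨G', hG'sub, hZeq, hG't, hG'f, by omega⟩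
  have hG'pack : ∃ G', Sub G' (ETree.node g1 c g2) ∧ Z = G'.subst (ntru H) H ∧
      G'.hasTru ∧ G'.hasFls ∧ 1 ≤ G'.depth := by
    rcases sub_node_inv hSsub with hEq | hsub | hsub
    · exact absurd (hEq ▸ hXf) hSnf
    · exact key _ h1 hsub (Sub.left c (Sub.refl _))
    · exact key _ h2 hsub (Sub.right c (Sub.refl _))
  obtain ⟨G', hG'sub, hZeq, hG't, hG'f, hG'd⟩ := hG'pack
  exact hNT G' g1 c g2 ⟨hG't, hG'f⟩ rfl
    (transferB hHt hHf hZeq hG'd hG'f g1 h1)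
    (transferB hHt hHf hZeq hG'd hG'f g2 h2)

/-- minimality and uniqueness analysis for conjunction compositions -/
lemma cbAnalysis {H Z : ETree A} (hHt : H.hasTru) (hHf : H.hasFls)
    (hNoNCB : ∀ Z', Mixed Z' → ¬ NCB Z' H) (hZt : Z.hasTru) (hZf : Z.hasFls) :
    ∀ G0 : ETree A, G0.hasTru → CompB Z (G0.subst H (nfls H)) →
      H.depth ≤ Z.depth ∧ (Z.depth = H.depth → Z = H) := by
  intro G0
  induction G0 with
  | tru =>
    intro _ h
    rw [subst_tru] at h
    rcases compB_inv h with hEq | hEq | ⟨l, b, r, hEq, hl, hr⟩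
    · exact ⟨le_of_eq (congrArg ETree.depth hEq), fun _ => hEq.symm⟩
    · exact absurd (hEq ▸ hHt) (not_hasTru_nfls Z)
    · exact absurd ⟨l, b, r, hEq, hl, hr⟩ (hNoNCB Z ⟨hZt, hZf⟩)
  | fls => intro h; exact absurd h not_hasTru_fls
  | node l b r ihl ihr =>
    intro hT h
    rw [subst_node] at h
    rcases compB_inv h with hEq | hEq | ⟨l', b', r', hEq, hl', hr'⟩
    · have hds := depth_subst (Y := H) (Z := nfls H) (G := ETree.node l b r)
        (depth_nfls H).symm
      rw [subst_node, hEq] at hds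
      rw [depth_node] at hds
      constructor
      · omega
      · intro he; exfalso; omega
    · have hXt : ((ETree.node l b r).subst H (nfls H)).hasTru :=
        hasTru_subst.mpr (Or.inl ⟨hT, hHt⟩)
      rw [subst_node, hEq] at hXt
      exact absurd hXt (not_hasTru_nfls Z)
    · injection hEq with f1 f2 f3
      subst f1; subst f3
      rcases hT with hT | hT
      · exact ihl hT hl'
      · exact ihr hT hr'

/-- minimality and uniqueness analysis for disjunction compositions -/
lemma cdAnalysis {H Z : ETree A} (hHt : H.hasTru) (hHf : H.hasFls)
    (hNoNCD : ∀ Z', Mixed Z' → ¬ NCD Z' H) (hZt : Z.hasTru) (hZf : Z.hasFls) :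
    ∀ G0 : ETree A, G0.hasFls → CompD Z (G0.subst (ntru H) H) →
      H.depth ≤ Z.depth ∧ (Z.depth = H.depth → Z = H) := by
  intro G0
  induction G0 with
  | fls =>
    intro _ h
    rw [subst_fls] at h
    rcases compD_inv h with hEq | hEq | ⟨l, b, r, hEq, hl, hr⟩
    · exact ⟨le_of_eq (congrArg ETree.depth hEq), fun _ => hEq.symm⟩
    · exact absurd (hEq ▸ hHf) (not_hasFls_ntru Z)
    · exact absurd ⟨l, b, r, hEq, hl, hr⟩ (hNoNCD Z ⟨hZt, hZf⟩)
  | tru => intro h; exact absurd h not_hasFls_tru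
  | node l b r ihl ihr =>
    intro hF h
    rw [subst_node] at h
    rcases compD_inv h with hEq | hEq | ⟨l', b', r', hEq, hl', hr'⟩
    · have hds := depth_subst (Y := ntru H) (Z := H) (G := ETree.node l b r)
        (depth_ntru H)
      rw [subst_node, hEq, depth_ntru] at hds
      rw [depth_node] at hds
      constructor
      · omega
      · intro he; exfalso; omega
    · have hXf : ((ETree.node l b r).subst (ntru H) H).hasFls :=
        hasFls_subst.mpr (Or.inr ⟨hF, hHf⟩)
      rw [subst_node, hEq] at hXf
      exact absurd hXf (not_hasFls_ntru Z)
    · injection hEq with f1 f2 f3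
      subst f1; subst f3
      rcases hF with hF | hF
      · exact ihl hF hl'
      · exact ihr hF hr'

/-! ### Term-level lemmas -/

def fsize : FTerm A → ℕ
  | .atom _ => 1
  | .tru => 1
  | .fls => 1
  | .neg p => fsize p + 1
  | .and p q => fsize p + fsize q + 1
  | .or p q => fsize p + fsize q + 1

lemma fsize_pos (p : FTerm A) : 1 ≤ fsize p := by
  cases p <;> simp [fsize]

lemma fe_and (p q : FTerm A) :
    fe (FTerm.and p q) = (fe p).subst (fe q) (nfls (fe q)) := rfl
lemma fe_or (p q : FTerm A) :
    fe (FTerm.or p q) = (fe p).subst (ntru (fe q)) (fe q) := rfl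

lemma feT_noFls {p : FTerm A} (h : IsFT_T p) : ¬ (fe p).hasFls := by
  induction h with
  | tru => exact not_hasFls_tru
  | @or a q hq ih =>
    intro hF
    rw [fe_or] at hF
    rw [show fe (FTerm.atom a) = ETree.node ETree.tru a ETree.fls from rfl,
      subst_node, subst_tru, subst_fls] at hF
    rcases hF with hF | hF
    · exact not_hasFls_ntru _ hF
    · exact ih hF

lemma feL_shape {p : FTerm A} (h : IsFT_L p) :
    ∃ (a : A) (Y : ETree A), ¬ Y.hasFls ∧
      (fe p = ETree.node Y a (nfls Y) ∨ fe p = ETree.node (nfls Y) a Y) := by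
  cases h with
  | pos a hq => exact ⟨a, fe _, feT_noFls hq, Or.inl rfl⟩
  | neg a hq => exact ⟨a, fe _, feT_noFls hq, Or.inr rfl⟩

lemma feL_mixed {p : FTerm A} (h : IsFT_L p) : Mixed (fe p) ∧ 1 ≤ (fe p).depth := by
  obtain ⟨a, Y, hY, hs | hs⟩ := feL_shape h <;> rw [hs]
  · exact ⟨⟨Or.inl ((tot Y).resolve_right hY), Or.inr (hasFls_nfls Y)⟩,
      by rw [depth_node]; omega⟩
  · exact ⟨⟨Or.inr ((tot Y).resolve_right hY), Or.inl (hasFls_nfls Y)⟩,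
      by rw [depth_node]; omega⟩

lemma comp1_sub {S W : ETree A} (h : Comp1 S W) : Sub S W := by
  induction h with
  | base => exact Sub.refl _
  | comp a _ _ ihl ihr => exact Sub.left a ihl

lemma feL_noNCB {p : FTerm A} (h : IsFT_L p) {Z : ETree A} (hZ : Mixed Z) :
    ¬ NCB Z (fe p) := by
  obtain ⟨a, Y, hY, hs | hs⟩ := feL_shape h <;> rintro ⟨l, b, r, hEq, hl, hr⟩ <;>
    rw [hs] at hEq
  · injection hEq with f1 f2 f3
    exact hY (by rw [f1]; exact hl.hasFls' hZ.2)
  · injection hEq with f1 f2 f3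
    exact hY (by rw [f3]; exact hr.hasFls' hZ.2)

lemma feL_noNCD {p : FTerm A} (h : IsFT_L p) {Z : ETree A} (hZ : Mixed Z) :
    ¬ NCD Z (fe p) := by
  obtain ⟨a, Y, hY, hs | hs⟩ := feL_shape h <;> rintro ⟨l, b, r, hEq, hl, hr⟩ <;>
    rw [hs] at hEq
  · injection hEq with f1 f2 f3
    exact not_hasTru_nfls Y (by rw [f3]; exact hr.hasTru' hZ.1)
  · injection hEq with f1 f2 f3
    exact not_hasTru_nfls Y (by rw [f1]; exact hl.hasTru' hZ.1)

lemma feL_NOTILE {p : FTerm A} (h : IsFT_L p) : NOTILE (fe p) := by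
  obtain ⟨a, Y, hY, hs | hs⟩ := feL_shape h <;> intro S l b r hM hEq h1 h2 <;>
    rw [hs] at hEq
  · injection hEq with f1 f2 f3
    exact hY (by rw [f1]; exact (comp1_sub h1).hasFls_up hM.2)
  · injection hEq with f1 f2 f3
    exact hY (by rw [f3]; exact (comp1_sub h2).hasFls_up hM.2)

lemma feMix : ∀ n : ℕ, ∀ p : FTerm A, fsize p ≤ n →
    ((IsFT_C p → Mixed (fe p) ∧ 1 ≤ (fe p).depth) ∧
     (IsFT_D p → Mixed (fe p) ∧ 1 ≤ (fe p).depth) ∧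
     (IsFT_Star p → Mixed (fe p) ∧ 1 ≤ (fe p).depth)) := by
  intro n
  induction n with
  | zero => intro p hp; have := fsize_pos p; omega
  | succ n ih =>
    intro p hp
    have hC : IsFT_C p → Mixed (fe p) ∧ 1 ≤ (fe p).depth := by
      intro h
      cases h with
      | ell hl => exact feL_mixed hl
      | @and p1 q1 hP hQ =>
        have e1 := fsize_pos p1
        have e2 := fsize_pos q1
        simp only [fsize] at hp
        have hP' := (ih p1 (by omega)).2.2 hP
        have hQ' := (ih q1 (by omega)).2.1 hQ
        rw [fe_and]
        refine ⟨⟨hasTru_subst.mpr (Or.inl ⟨hP'.1.1, hQ'.1.1⟩),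
                 hasFls_substAll hQ'.1.2 (hasFls_nfls _)⟩, ?_⟩
        rw [depth_subst (depth_nfls _).symm]
        have := hP'.2
        omega
    have hD : IsFT_D p → Mixed (fe p) ∧ 1 ≤ (fe p).depth := by
      intro h
      cases h with
      | ell hl => exact feL_mixed hl
      | @or p1 q1 hP hQ =>
        have e1 := fsize_pos p1
        have e2 := fsize_pos q1
        simp only [fsize] at hp
        have hP' := (ih p1 (by omega)).2.2 hP
        have hQ' := (ih q1 (by omega)).1 hQ
        rw [fe_or]
        refine ⟨⟨hasTru_substAll (hasTru_ntru _) hQ'.1.1,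
                 hasFls_subst.mpr (Or.inr ⟨hP'.1.2, hQ'.1.2⟩)⟩, ?_⟩
        rw [depth_subst (depth_ntru _)]
        have := hP'.2
        omega
    refine ⟨hC, hD, fun h => ?_⟩
    cases h with
    | c hc => exact hC hc
    | d hd => exact hD hd

lemma theta : ∀ n : ℕ, ∀ p : FTerm A, fsize p ≤ n →
    ((IsFT_D p → ∀ Z, Mixed Z → ¬ NCB Z (fe p)) ∧
     (IsFT_C p → ∀ Z, Mixed Z → ¬ NCD Z (fe p)) ∧
     (IsFT_Star p → NOTILE (fe p))) := by
  intro n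
  induction n with
  | zero => intro p hp; have := fsize_pos p; omega
  | succ n ih =>
    intro p hp
    have hD : IsFT_D p → ∀ Z, Mixed Z → ¬ NCB Z (fe p) := by
      intro h Z hZ
      cases h with
      | ell hl => exact feL_noNCB hl hZ
      | @or p1 q1 hP hQ =>
        have e1 := fsize_pos p1
        have e2 := fsize_pos q1
        simp only [fsize] at hp
        have hNT := (ih p1 (by omega)).2.2 hP
        have hP' := (feMix (fsize p1) p1 le_rfl).2.2 hP
        have hQ' := (feMix (fsize q1) q1 le_rfl).1 hQ
        rw [fe_or]
        exact mainDisj hNT hP'.1.1 hP'.1.2 hQ'.1.1 hQ'.1.2 Z hZ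
    have hC : IsFT_C p → ∀ Z, Mixed Z → ¬ NCD Z (fe p) := by
      intro h Z hZ
      cases h with
      | ell hl => exact feL_noNCD hl hZ
      | @and p1 q1 hP hQ =>
        have e1 := fsize_pos p1
        have e2 := fsize_pos q1
        simp only [fsize] at hp
        have hNT := (ih p1 (by omega)).2.2 hP
        have hP' := (feMix (fsize p1) p1 le_rfl).2.2 hP
        have hQ' := (feMix (fsize q1) q1 le_rfl).2.1 hQ
        rw [fe_and]
        exact mainConj hNT hP'.1.1 hP'.1.2 hQ'.1.1 hQ'.1.2 Z hZ
    refine ⟨hD, hC, fun h => ?_⟩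
    cases h with
    | c hc =>
      cases hc with
      | ell hl => exact feL_NOTILE hl
      | @and p1 q1 hP hQ =>
        intro S l b r hM hEq h1 h2
        exact hC (IsFT_C.and hP hQ) S hM ⟨l, b, r, hEq, comp1_compD h1, comp1_compD h2⟩
    | d hd =>
      cases hd with
      | ell hl => exact feL_NOTILE hl
      | @or p1 q1 hP hQ =>
        intro S l b r hM hEq h1 h2
        exact hD (IsFT_D.or hP hQ) S hM ⟨l, b, r, hEq, comp1_compB h1, comp1_compB h2⟩

/-! ### Bridge to boxed trees and final assembly -/

lemma toBoxes_substBoxes (G Y Z : ETree A) :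
    (G.toBoxes).substBoxes Y Z = G.subst Y Z := by
  induction G with
  | tru => rfl
  | fls => rfl
  | node l a r ihl ihr =>
    show ETree.node _ a _ = ETree.node _ a _
    rw [ihl, ihr]

lemma toBoxes_not_hasTru (G : ETree A) : ¬ (G.toBoxes).hasTru := by
  induction G with
  | tru => exact id
  | fls => exact id
  | node l a r ihl ihr => rintro (h | h)
                          · exact ihl h
                          · exact ihr h

lemma toBoxes_not_hasFls (G : ETree A) : ¬ (G.toBoxes).hasFls := by
  induction G with
  | tru => exact id
  | fls => exact id
  | node l a r ihl ihr => rintro (h | h)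
                          · exact ihl h
                          · exact ihr h

lemma toBoxes_hasBox1 (G : ETree A) : (G.toBoxes).hasBox1 ↔ G.hasTru := by
  induction G with
  | tru => simp [ETree.toBoxes, ETree2.hasBox1, ETree.hasTru]
  | fls => simp [ETree.toBoxes, ETree2.hasBox1, ETree.hasTru]
  | node l a r ihl ihr =>
    show ETree2.hasBox1 _ ∨ ETree2.hasBox1 _ ↔ _
    rw [ihl, ihr]; rfl

lemma toBoxes_hasBox2 (G : ETree A) : (G.toBoxes).hasBox2 ↔ G.hasFls := by
  induction G with
  | tru => simp [ETree.toBoxes, ETree2.hasBox2, ETree.hasFls]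
  | fls => simp [ETree.toBoxes, ETree2.hasBox2, ETree.hasFls]
  | node l a r ihl ihr =>
    show ETree2.hasBox2 _ ∨ ETree2.hasBox2 _ ↔ _
    rw [ihl, ihr]; rfl

lemma boxes_compB {Y : ETree2 A} (h1 : ¬ Y.hasTru) (h2 : ¬ Y.hasFls) (Z : ETree A) :
    CompB Z (Y.substBoxes Z (nfls Z)) := by
  induction Y with
  | tru => exact absurd trivial h1
  | fls => exact absurd trivial h2
  | box1 => exact CompB.base
  | box2 => exact CompB.nbase
  | node l a r ihl ihr =>
    exact CompB.comp a (ihl (fun h => h1 (Or.inl h)) (fun h => h2 (Or.inl h)))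
      (ihr (fun h => h1 (Or.inr h)) (fun h => h2 (Or.inr h)))

lemma boxes_compD {Y : ETree2 A} (h1 : ¬ Y.hasTru) (h2 : ¬ Y.hasFls) (Z : ETree A) :
    CompD Z (Y.substBoxes (ntru Z) Z) := by
  induction Y with
  | tru => exact absurd trivial h1
  | fls => exact absurd trivial h2
  | box1 => exact CompD.nbase
  | box2 => exact CompD.base
  | node l a r ihl ihr =>
    exact CompD.comp a (ihl (fun h => h1 (Or.inl h)) (fun h => h2 (Or.inl h)))
      (ihr (fun h => h1 (Or.inr h)) (fun h => h2 (Or.inr h)))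

lemma substBoxes_depth_ge {B C : ETree A} (hd : B.depth = C.depth) :
    ∀ {Y : ETree2 A}, ¬ Y.hasTru → ¬ Y.hasFls →
      B.depth ≤ (Y.substBoxes B C).depth := by
  intro Y
  induction Y with
  | tru => intro h1 _; exact absurd trivial h1
  | fls => intro _ h2; exact absurd trivial h2
  | box1 => intro _ _; exact le_refl _
  | box2 => intro _ _; exact le_of_eq hd
  | node l a r ihl ihr =>
    intro h1 h2
    have := ihl (fun h => h1 (Or.inl h)) (fun h => h2 (Or.inl h))
    show B.depth ≤ (ETree.node _ a _).depth
    rw [depth_node]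
    omega

lemma substBoxes_injY {B C : ETree A} (hne : B ≠ C) (hd : B.depth = C.depth) :
    ∀ {Y Y' : ETree2 A}, ¬ Y.hasTru → ¬ Y.hasFls → ¬ Y'.hasTru → ¬ Y'.hasFls →
      Y.substBoxes B C = Y'.substBoxes B C → Y = Y' := by
  intro Y
  induction Y with
  | tru => intro _ h1; exact absurd trivial h1
  | fls => intro _ _ h2; exact absurd trivial h2
  | box1 =>
    intro Y' _ _ h1' h2' heq
    cases Y' with
    | tru => exact absurd trivial h1'
    | fls => exact absurd trivial h2'
    | box1 => rfl
    | box2 => exact absurd heq hne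
    | node l a r =>
      exfalso
      have hc := substBoxes_depth_ge hd (Y := l)
        (fun h => h1' (Or.inl h)) (fun h => h2' (Or.inl h))
      have hdd := congrArg ETree.depth heq
      rw [show ((ETree2.node l a r).substBoxes B C) = ETree.node (l.substBoxes B C) a
        (r.substBoxes B C) from rfl, depth_node] at hdd
      simp only [ETree2.substBoxes] at hdd
      omega
  | box2 =>
    intro Y' _ _ h1' h2' heq
    cases Y' with
    | tru => exact absurd trivial h1'
    | fls => exact absurd trivial h2'
    | box2 => rfl
    | box1 => exact absurd heq.symm hne
    | node l a r =>
      exfalso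
      have hc := substBoxes_depth_ge hd (Y := l)
        (fun h => h1' (Or.inl h)) (fun h => h2' (Or.inl h))
      have hdd := congrArg ETree.depth heq
      rw [show ((ETree2.node l a r).substBoxes B C) = ETree.node (l.substBoxes B C) a
        (r.substBoxes B C) from rfl, depth_node] at hdd
      simp only [ETree2.substBoxes] at hdd
      omega
  | node l a r ihl ihr =>
    intro Y' h1 h2 h1' h2' heq
    cases Y' with
    | tru => exact absurd trivial h1'
    | fls => exact absurd trivial h2'
    | box1 =>
      exfalso
      have hc := substBoxes_depth_ge hd (Y := l)
        (fun h => h1 (Or.inl h)) (fun h => h2 (Or.inl h))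
      have hdd := congrArg ETree.depth heq
      rw [show ((ETree2.node l a r).substBoxes B C) = ETree.node (l.substBoxes B C) a
        (r.substBoxes B C) from rfl, depth_node] at hdd
      simp only [ETree2.substBoxes] at hdd
      omega
    | box2 =>
      exfalso
      have hc := substBoxes_depth_ge hd (Y := l)
        (fun h => h1 (Or.inl h)) (fun h => h2 (Or.inl h))
      have hdd := congrArg ETree.depth heq
      rw [show ((ETree2.node l a r).substBoxes B C) = ETree.node (l.substBoxes B C) a
        (r.substBoxes B C) from rfl, depth_node] at hdd
      simp only [ETree2.substBoxes] at hdd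
      omega
    | node l' a' r' =>
      have heq' : ETree.node (l.substBoxes B C) a (r.substBoxes B C) =
          ETree.node (l'.substBoxes B C) a' (r'.substBoxes B C) := heq
      injection heq' with f1 f2 f3
      rw [ihl (fun h => h1 (Or.inl h)) (fun h => h2 (Or.inl h))
            (fun h => h1' (Or.inl h)) (fun h => h2' (Or.inl h)) f1,
          ihr (fun h => h1 (Or.inr h)) (fun h => h2 (Or.inr h))
            (fun h => h1' (Or.inr h)) (fun h => h2' (Or.inr h)) f3, f2]

lemma felAnd (P Q : FTerm A) (hP : IsFT_Star P) (hQ : IsFT_D Q) :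
    IsCdF (fe (FTerm.and P Q)) (fe P).toBoxes (fe Q) ∧
    (∀ (Y : ETree2 A) (Z : ETree A),
       IsCdF (fe (FTerm.and P Q)) Y Z → Y = (fe P).toBoxes ∧ Z = fe Q) ∧
    (∀ (Y : ETree2 A) (Z : ETree A), ¬ IsDdF (fe (FTerm.and P Q)) Y Z) := by
  have hPM := (feMix (fsize P) P le_rfl).2.2 hP
  have hQM := (feMix (fsize Q) Q le_rfl).2.1 hQ
  have hNoNCB := (theta (fsize Q) Q le_rfl).1 hQ
  have hNoNCD_X := (theta (fsize (FTerm.and P Q)) _ le_rfl).2.1 (IsFT_C.and hP hQ)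
  have hccd : IsCcdF (fe (FTerm.and P Q)) (fe P).toBoxes (fe Q) := by
    refine ⟨?_, ?_, ?_, toBoxes_not_hasTru _, toBoxes_not_hasFls _, hQM.1.1, hQM.1.2⟩
    · rw [fe_and, toBoxes_substBoxes]
    · exact (toBoxes_hasBox1 _).mpr hPM.1.1
    · exact (toBoxes_hasBox2 _).mpr hPM.1.2
  have hmin : ∀ (Y' : ETree2 A) (Z' : ETree A),
      IsCcdF (fe (FTerm.and P Q)) Y' Z' → (fe Q).depth ≤ Z'.depth := by
    rintro Y' Z' ⟨hEq, hB1, hB2, hYt, hYf, hZt, hZf⟩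
    have hCB : CompB Z' (fe (FTerm.and P Q)) := by
      rw [hEq]; exact boxes_compB hYt hYf Z'
    rw [fe_and] at hCB
    exact (cbAnalysis hQM.1.1 hQM.1.2 hNoNCB hZt hZf (fe P) hPM.1.1 hCB).1
  refine ⟨⟨hccd, hmin⟩, ?_, ?_⟩
  · rintro Y Z ⟨⟨hEq, hB1, hB2, hYt, hYf, hZt, hZf⟩, hm⟩
    have hle : Z.depth ≤ (fe Q).depth := hm _ _ hccd
    have hCB : CompB Z (fe (FTerm.and P Q)) := by
      rw [hEq]; exact boxes_compB hYt hYf Z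
    rw [fe_and] at hCB
    obtain ⟨hge, heqc⟩ := cbAnalysis hQM.1.1 hQM.1.2 hNoNCB hZt hZf (fe P) hPM.1.1 hCB
    have hZeq : Z = fe Q := heqc (le_antisymm hle hge)
    subst hZeq
    refine ⟨?_, rfl⟩
    have hne : fe Q ≠ nfls (fe Q) := fun h => not_hasTru_nfls _ (h ▸ hQM.1.1)
    have hEq2 : Y.substBoxes (fe Q) (nfls (fe Q)) =
        ((fe P).toBoxes).substBoxes (fe Q) (nfls (fe Q)) := by
      rw [toBoxes_substBoxes, ← fe_and, ← hEq]
    exact substBoxes_injY hne (depth_nfls _).symm hYt hYf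
      (toBoxes_not_hasTru _) (toBoxes_not_hasFls _) hEq2
  · rintro Y Z ⟨⟨hEq, hB1, hB2, hYt, hYf, hZt, hZf⟩, _⟩
    cases Y with
    | tru => exact hYt trivial
    | fls => exact hYf trivial
    | box1 => exact hB2
    | box2 => exact hB1
    | node l b r =>
      exact hNoNCD_X Z ⟨hZt, hZf⟩ ⟨l.substBoxes (ntru Z) Z, b, r.substBoxes (ntru Z) Z,
        hEq,
        boxes_compD (fun h => hYt (Or.inl h)) (fun h => hYf (Or.inl h)) Z,
        boxes_compD (fun h => hYt (Or.inr h)) (fun h => hYf (Or.inr h)) Z⟩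

lemma felOr (P Q : FTerm A) (hP : IsFT_Star P) (hQ : IsFT_C Q) :
    (∀ (Y : ETree2 A) (Z : ETree A), ¬ IsCdF (fe (FTerm.or P Q)) Y Z) ∧
    IsDdF (fe (FTerm.or P Q)) (fe P).toBoxes (fe Q) ∧
    (∀ (Y : ETree2 A) (Z : ETree A),
       IsDdF (fe (FTerm.or P Q)) Y Z → Y = (fe P).toBoxes ∧ Z = fe Q) := by
  have hPM := (feMix (fsize P) P le_rfl).2.2 hP
  have hQM := (feMix (fsize Q) Q le_rfl).1 hQ
  have hNoNCD := (theta (fsize Q) Q le_rfl).2.1 hQ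
  have hNoNCB_X := (theta (fsize (FTerm.or P Q)) _ le_rfl).1 (IsFT_D.or hP hQ)
  have hcdd : IsCddF (fe (FTerm.or P Q)) (fe P).toBoxes (fe Q) := by
    refine ⟨?_, ?_, ?_, toBoxes_not_hasTru _, toBoxes_not_hasFls _, hQM.1.1, hQM.1.2⟩
    · rw [fe_or, toBoxes_substBoxes]
    · exact (toBoxes_hasBox1 _).mpr hPM.1.1
    · exact (toBoxes_hasBox2 _).mpr hPM.1.2
  have hmin : ∀ (Y' : ETree2 A) (Z' : ETree A),
      IsCddF (fe (FTerm.or P Q)) Y' Z' → (fe Q).depth ≤ Z'.depth := by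
    rintro Y' Z' ⟨hEq, hB1, hB2, hYt, hYf, hZt, hZf⟩
    have hCD : CompD Z' (fe (FTerm.or P Q)) := by
      rw [hEq]; exact boxes_compD hYt hYf Z'
    rw [fe_or] at hCD
    exact (cdAnalysis hQM.1.1 hQM.1.2 hNoNCD hZt hZf (fe P) hPM.1.2 hCD).1
  refine ⟨?_, ⟨hcdd, hmin⟩, ?_⟩
  · rintro Y Z ⟨⟨hEq, hB1, hB2, hYt, hYf, hZt, hZf⟩, _⟩
    cases Y with
    | tru => exact hYt trivial
    | fls => exact hYf trivial
    | box1 => exact hB2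
    | box2 => exact hB1
    | node l b r =>
      exact hNoNCB_X Z ⟨hZt, hZf⟩ ⟨l.substBoxes Z (nfls Z), b, r.substBoxes Z (nfls Z),
        hEq,
        boxes_compB (fun h => hYt (Or.inl h)) (fun h => hYf (Or.inl h)) Z,
        boxes_compB (fun h => hYt (Or.inr h)) (fun h => hYf (Or.inr h)) Z⟩
  · rintro Y Z ⟨⟨hEq, hB1, hB2, hYt, hYf, hZt, hZf⟩, hm⟩
    have hle : Z.depth ≤ (fe Q).depth := hm _ _ hcdd
    have hCD : CompD Z (fe (FTerm.or P Q)) := by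
      rw [hEq]; exact boxes_compD hYt hYf Z
    rw [fe_or] at hCD
    obtain ⟨hge, heqc⟩ := cdAnalysis hQM.1.1 hQM.1.2 hNoNCD hZt hZf (fe P) hPM.1.2 hCD
    have hZeq : Z = fe Q := heqc (le_antisymm hle hge)
    subst hZeq
    refine ⟨?_, rfl⟩
    have hne : ntru (fe Q) ≠ fe Q := fun h => not_hasFls_ntru _ (h.symm ▸ hQM.1.2)
    have hEq2 : Y.substBoxes (ntru (fe Q)) (fe Q) =
        ((fe P).toBoxes).substBoxes (ntru (fe Q)) (fe Q) := by
      rw [toBoxes_substBoxes, ← fe_or, ← hEq]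
    exact substBoxes_injY hne (depth_ntru _) hYt hYf
      (toBoxes_not_hasTru _) (toBoxes_not_hasFls _) hEq2

end FelAux

/-- conjunction/disjunction decomposition theorem (FEL). -/
theorem fel_cd_dd_theorem (A : Type) [Countable A] :
    (∀ (P Q : FTerm A), IsFT_Star P → IsFT_D Q →
      IsCdF (fe (FTerm.and P Q)) (fe P).toBoxes (fe Q) ∧
      (∀ (Y : ETree2 A) (Z : ETree A),
        IsCdF (fe (FTerm.and P Q)) Y Z → Y = (fe P).toBoxes ∧ Z = fe Q) ∧
      (∀ (Y : ETree2 A) (Z : ETree A), ¬ IsDdF (fe (FTerm.and P Q)) Y Z)) ∧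
    (∀ (P Q : FTerm A), IsFT_Star P → IsFT_C Q →
      (∀ (Y : ETree2 A) (Z : ETree A), ¬ IsCdF (fe (FTerm.or P Q)) Y Z) ∧
      IsDdF (fe (FTerm.or P Q)) (fe P).toBoxes (fe Q) ∧
      (∀ (Y : ETree2 A) (Z : ETree A),
        IsDdF (fe (FTerm.or P Q)) Y Z → Y = (fe P).toBoxes ∧ Z = fe Q)) :=
  ⟨fun P Q hP hQ => FelAux.felAnd P Q hP hQ, fun P Q hP hQ => FelAux.felOr P Q hP hQ⟩
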